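/- Let δ₁, δ₂ > 0 and let W = [w₁, w₂] ∈ ℝ^{d×2} be a minimizer of ‖w₁‖² + ‖w₂‖² subject to the constraints (δ_{y_i} w_{y_i} - δ_c w_c)ᵀ h_i ≥ 1 for all i and all c ≠ y_i (the CDT max-margin problem for binary classification). Then δ₁⁻¹ w₁ + δ₂⁻¹ w₂ = 0. -/

import Mathlib

/-!
Shifting every `w c` by `δ c⁻¹ • t` leaves each margin `δ (y i) • w (y i) - δ c • w c` unchanged,
so all these shifts stay feasible. Along this family the objective is the quadratic
`t ↦ ∑ ‖w c‖² - 2 ⟪s, t⟫ + A ‖t‖²` with `s = ∑ δ c⁻¹ • w c` and `A = ∑ δ c⁻²`; its value at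
`t = A⁻¹ • s` is `∑ ‖w c‖² - A⁻¹ ‖s‖²`, so a minimizer must have `s = 0`.
-/

open scoped InnerProductSpace
open Finset

section ShiftAlong

variable {ι E : Type*} [Fintype ι] [NormedAddCommGroup E] [InnerProductSpace ℝ E]

theorem sum_norm_sub_smul_sq (w : ι → E) (a : ι → ℝ) (t : E) :
    ∑ i, ‖w i - a i • t‖ ^ 2 =
      ∑ i, ‖w i‖ ^ 2 - 2 * ⟪∑ i, a i • w i, t⟫_ℝ + (∑ i, a i ^ 2) * ‖t‖ ^ 2 := by
  simp only [norm_sub_sq_real, inner_smul_right, norm_smul, mul_pow, Real.norm_eq_abs, sq_abs,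
    sum_inner, inner_smul_left, RCLike.conj_to_real, sum_add_distrib, sum_sub_distrib,
    mul_sum, sum_mul]

theorem sum_norm_sub_smul_sq_at_projection (w : ι → E) (a : ι → ℝ) (hA : ∑ i, a i ^ 2 ≠ 0) :
    ∑ i, ‖w i - a i • ((∑ j, a j ^ 2)⁻¹ • ∑ j, a j • w j)‖ ^ 2 =
      ∑ i, ‖w i‖ ^ 2 - (∑ j, a j ^ 2)⁻¹ * ‖∑ j, a j • w j‖ ^ 2 := by
  rw [sum_norm_sub_smul_sq, inner_smul_right, real_inner_self_eq_norm_sq, norm_smul,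
    Real.norm_eq_abs, mul_pow, sq_abs]
  field_simp
  ring

theorem sum_smul_eq_zero_of_forall_le_sum_norm_sub_smul_sq (w : ι → E) (a : ι → ℝ)
    (hA : 0 < ∑ i, a i ^ 2) (hmin : ∀ t : E, ∑ i, ‖w i‖ ^ 2 ≤ ∑ i, ‖w i - a i • t‖ ^ 2) :
    ∑ i, a i • w i = 0 := by
  have hle := hmin ((∑ j, a j ^ 2)⁻¹ • ∑ j, a j • w j)
  rw [sum_norm_sub_smul_sq_at_projection w a hA.ne'] at hle
  have hs : ‖∑ j, a j • w j‖ ^ 2 ≤ 0 :=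
    nonpos_of_mul_nonpos_right (by linarith) (inv_pos.mpr hA)
  exact norm_eq_zero.mp (pow_eq_zero_iff two_ne_zero |>.mp (le_antisymm hs (sq_nonneg _)))

end ShiftAlong

theorem cdt_centering {d n : ℕ}
    (h : Fin n → EuclideanSpace ℝ (Fin d)) (y : Fin n → Fin 2)
    (δ : Fin 2 → ℝ) (hδ : ∀ c, 0 < δ c)
    (w : Fin 2 → EuclideanSpace ℝ (Fin d))
    (feas : ∀ i, ∀ c, c ≠ y i → ⟪δ (y i) • w (y i) - δ c • w c, h i⟫_ℝ ≥ 1)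
    (opt : ∀ w' : Fin 2 → EuclideanSpace ℝ (Fin d),
      (∀ i, ∀ c, c ≠ y i → ⟪δ (y i) • w' (y i) - δ c • w' c, h i⟫_ℝ ≥ 1) →
      ‖w 0‖ ^ 2 + ‖w 1‖ ^ 2 ≤ ‖w' 0‖ ^ 2 + ‖w' 1‖ ^ 2) :
    (δ 0)⁻¹ • w 0 + (δ 1)⁻¹ • w 1 = 0 := by
  have hA : 0 < ∑ c, (δ c)⁻¹ ^ 2 :=
    sum_pos (fun c _ => pow_pos (inv_pos.mpr (hδ c)) 2) univ_nonempty
  have hshift (t : EuclideanSpace ℝ (Fin d)) (c : Fin 2) :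
      δ c • (w c - (δ c)⁻¹ • t) = δ c • w c - t := by
    rw [smul_sub, smul_inv_smul₀ (hδ c).ne']
  have hmin (t : EuclideanSpace ℝ (Fin d)) :
      ∑ c, ‖w c‖ ^ 2 ≤ ∑ c, ‖w c - (δ c)⁻¹ • t‖ ^ 2 := by
    have hfeas : ∀ i, ∀ c, c ≠ y i →
        ⟪δ (y i) • (w (y i) - (δ (y i))⁻¹ • t) - δ c • (w c - (δ c)⁻¹ • t), h i⟫_ℝ ≥ 1 := by
      intro i c hc
      rw [hshift, hshift, sub_sub_sub_cancel_right]
      exact feas i c hc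
    simpa only [Fin.sum_univ_two] using opt (fun c => w c - (δ c)⁻¹ • t) hfeas
  simpa only [Fin.sum_univ_two] using
    sum_smul_eq_zero_of_forall_le_sum_norm_sub_smul_sq w (fun c => (δ c)⁻¹) hA hmin
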